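/- Let S be a commutative ring, F a formal group law over S, n ≥ 2, and 1 ≤ i ≤ n−1. Then in A = R ⊗_{R^{s_i}} R one has, for all r1, r2 ∈ R, the splitting identity r1 ⊗ r2 = (r1·r2) ⊗ 1 + ((r1·∂'_i(r2)) ⊗ 1)·ξ'. In particular (the case r1 = 1), 1 ⊗ r − r ⊗ 1 = (∂'_i(r) ⊗ 1)·ξ' for every r ∈ R. -/

import Mathlib

/- Common setup: substitution of multivariate power series, formal group laws,
formal inverses, and the variable–swapping operation. -/

open MvPowerSeries Finsupp

noncomputable section

variable {S : Type*} [CommRing S]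

/-- Substitution of a family of multivariate power series (each intended to have zero
constant coefficient) into a power series in `k` variables.  When every `a j` has zero
constant coefficient, the coefficient of a monomial `m` of the substituted series only
receives contributions from exponents `d` with `d j ≤ deg m`, so the finite sum below
computes the genuine substitution. -/
noncomputable def msubst {k n : ℕ} (a : Fin k → MvPowerSeries (Fin n) S)
    (F : MvPowerSeries (Fin k) S) : MvPowerSeries (Fin n) S :=
  fun m =>
    ∑ d ∈ Finset.Iic (equivFunOnFinite.symm fun _ : Fin k => m.sum fun _ e => e),
      MvPowerSeries.coeff d F * MvPowerSeries.coeff m (∏ j, a j ^ d j)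

/-- `F ∈ S[[x,y]]` is a (one-dimensional, commutative) formal group law over `S`:
zero constant coefficient, commutativity `F(x,y) = F(y,x)`, unitality `F(x,0) = x`,
and associativity `F(F(x,y),z) = F(x,F(y,z))`. -/
def IsFormalGroupLaw (F : MvPowerSeries (Fin 2) S) : Prop :=
  MvPowerSeries.constantCoeff F = 0 ∧
  msubst ![(X 1 : MvPowerSeries (Fin 2) S), X 0] F = F ∧
  msubst ![(X 0 : MvPowerSeries (Fin 2) S), 0] F = X 0 ∧
  msubst ![msubst ![(X 0 : MvPowerSeries (Fin 3) S), X 1] F, X 2] F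
    = msubst ![(X 0 : MvPowerSeries (Fin 3) S), msubst ![(X 1 : MvPowerSeries (Fin 3) S), X 2] F] F

/-- `ι ∈ S[[x]]` is the formal inverse of `F`: it has zero constant coefficient
and `F(x, ι(x)) = 0`. -/
def IsFormalInverse (F : MvPowerSeries (Fin 2) S) (ι : MvPowerSeries (Fin 1) S) : Prop :=
  MvPowerSeries.constantCoeff ι = 0 ∧
  msubst ![(X 0 : MvPowerSeries (Fin 1) S), ι] F = 0

/-- `ι(b)`, the substitution of `b` into the formal inverse `ι`. -/
noncomputable def fneg (ι : MvPowerSeries (Fin 1) S) {n : ℕ}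
    (b : MvPowerSeries (Fin n) S) : MvPowerSeries (Fin n) S :=
  msubst ![b] ι

/-- `a −_F b := F(a, ι(b))`. -/
noncomputable def fsub (F : MvPowerSeries (Fin 2) S) (ι : MvPowerSeries (Fin 1) S) {n : ℕ}
    (a b : MvPowerSeries (Fin n) S) : MvPowerSeries (Fin n) S :=
  msubst ![a, fneg ι b] F

/-- Substitution `g(a,b)` of two power series into a two-variable power series `g`. -/
noncomputable def gsub (g : MvPowerSeries (Fin 2) S) {n : ℕ}
    (a b : MvPowerSeries (Fin n) S) : MvPowerSeries (Fin n) S :=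
  msubst ![a, b] g

/-- The map on multivariate power series interchanging the variables `x_i` and `x_j`
(the renaming along the transposition `(i,j)`). -/
def swapVars {n : ℕ} (i j : Fin n) (f : MvPowerSeries (Fin n) S) :
    MvPowerSeries (Fin n) S :=
  fun m => f (equivMapDomain (Equiv.swap i j) m)

theorem swapVars_coeff {n : ℕ} (i j : Fin n) (f : MvPowerSeries (Fin n) S) (m : Fin n →₀ ℕ) :
    MvPowerSeries.coeff m (swapVars i j f)
      = MvPowerSeries.coeff (equivMapDomain (Equiv.swap i j) m) f := rfl

theorem equivMapDomain_swap_invol {n : ℕ} (i j : Fin n) (m : Fin n →₀ ℕ) :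
    equivMapDomain (Equiv.swap i j) (equivMapDomain (Equiv.swap i j) m) = m := by
  rw [← equivMapDomain_trans, Equiv.swap_swap, equivMapDomain_refl]

theorem equivMapDomain_add' {n : ℕ} (e : Fin n ≃ Fin n) (a b : Fin n →₀ ℕ) :
    equivMapDomain e (a + b) = equivMapDomain e a + equivMapDomain e b := by
  ext x; simp [equivMapDomain_apply]

theorem swapVars_add {n : ℕ} (i j : Fin n) (f h : MvPowerSeries (Fin n) S) :
    swapVars i j (f + h) = swapVars i j f + swapVars i j h := rfl

theorem swapVars_mul {n : ℕ} (i j : Fin n) (f h : MvPowerSeries (Fin n) S) :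
    swapVars i j (f * h) = swapVars i j f * swapVars i j h := by
  ext m
  rw [swapVars_coeff, MvPowerSeries.coeff_mul, MvPowerSeries.coeff_mul]
  refine Finset.sum_nbij'
    (fun p => (equivMapDomain (Equiv.swap i j) p.1, equivMapDomain (Equiv.swap i j) p.2))
    (fun p => (equivMapDomain (Equiv.swap i j) p.1, equivMapDomain (Equiv.swap i j) p.2))
    ?_ ?_ ?_ ?_ ?_
  · intro p hp
    rw [Finset.HasAntidiagonal.mem_antidiagonal] at hp ⊢
    rw [← equivMapDomain_add', hp, equivMapDomain_swap_invol]
  · intro p hp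
    rw [Finset.HasAntidiagonal.mem_antidiagonal] at hp ⊢
    rw [← equivMapDomain_add', hp]
  · intro p _; simp [equivMapDomain_swap_invol]
  · intro p _; simp [equivMapDomain_swap_invol]
  · intro p _
    rw [swapVars_coeff, swapVars_coeff, equivMapDomain_swap_invol, equivMapDomain_swap_invol]

theorem swapVars_C {n : ℕ} (i j : Fin n) (s : S) :
    swapVars i j (MvPowerSeries.C s : MvPowerSeries (Fin n) S) = (MvPowerSeries.C s : MvPowerSeries (Fin n) S) := by
  ext m
  rw [swapVars_coeff, MvPowerSeries.coeff_C, MvPowerSeries.coeff_C]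
  by_cases hm : m = 0
  · subst hm; rw [equivMapDomain_zero]
  · rw [if_neg, if_neg hm]
    intro hc
    apply hm
    have := congrArg (equivMapDomain (Equiv.swap i j)) hc
    rwa [equivMapDomain_swap_invol, equivMapDomain_zero] at this

theorem swapVars_one {n : ℕ} (i j : Fin n) :
    swapVars i j (1 : MvPowerSeries (Fin n) S) = 1 := by
  have := swapVars_C (S := S) i j 1
  rwa [map_one] at this

/-- The fixed subalgebra `R^{s_i}` of power series invariant under interchanging
the variables `x_i` and `x_j`. -/
noncomputable def fixedSubalgebra (S : Type*) [CommRing S] {n : ℕ} (i j : Fin n) :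
    Subalgebra S (MvPowerSeries (Fin n) S) where
  carrier := {f | swapVars i j f = f}
  mul_mem' := by
    intro a b ha hb
    simp only [Set.mem_setOf_eq] at *
    rw [swapVars_mul, ha, hb]
  add_mem' := by
    intro a b ha hb
    simp only [Set.mem_setOf_eq] at *
    rw [swapVars_add, ha, hb]
  algebraMap_mem' := fun s => swapVars_C i j s

/-- `s_i` as an algebra homomorphism over the fixed subalgebra. -/
noncomputable def swapAlgHom (S : Type*) [CommRing S] {n : ℕ} (i j : Fin n) :
    MvPowerSeries (Fin n) S →ₐ[fixedSubalgebra S i j] MvPowerSeries (Fin n) S where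
  toFun := swapVars i j
  map_one' := swapVars_one i j
  map_mul' := swapVars_mul i j
  map_zero' := rfl
  map_add' := swapVars_add i j
  commutes' := fun r => r.2

open TensorProduct in
/-- The elementary Bott–Samelson bimodule `A = R ⊗_{R^{s_i}} R`. -/
noncomputable abbrev BSB (S : Type*) [CommRing S] {n : ℕ} (i j : Fin n) : Type _ :=
  (MvPowerSeries (Fin n) S) ⊗[fixedSubalgebra S i j] (MvPowerSeries (Fin n) S)

/-- The multiplication map `μ : A → R`, `r1 ⊗ r2 ↦ r1·r2`. -/
noncomputable def mulHom (S : Type*) [CommRing S] {n : ℕ} (i j : Fin n) :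
    BSB S i j →ₐ[fixedSubalgebra S i j] MvPowerSeries (Fin n) S :=
  Algebra.TensorProduct.productMap (AlgHom.id _ _) (AlgHom.id _ _)

/-- The twisted multiplication map `μ_s : A → R`, `r1 ⊗ r2 ↦ r1·s_i(r2)`. -/
noncomputable def mulsHom (S : Type*) [CommRing S] {n : ℕ} (i j : Fin n) :
    BSB S i j →ₐ[fixedSubalgebra S i j] MvPowerSeries (Fin n) S :=
  Algebra.TensorProduct.productMap (AlgHom.id _ _) (swapAlgHom S i j)

open TensorProduct in
/-- The element `ξ = x_i⊗1 −_F 1⊗x_{i+1} := (g(x_i,x_j)⁻¹ ⊗ 1)·(1 ⊗ x_i − x_j ⊗ 1)` of `A`. -/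
noncomputable def xiElt (g : MvPowerSeries (Fin 2) S) {n : ℕ} (i j : Fin n) : BSB S i j :=
  (Ring.inverse (gsub g (X i) (X j)) ⊗ₜ[fixedSubalgebra S i j] (1 : MvPowerSeries (Fin n) S)) *
    ((1 : MvPowerSeries (Fin n) S) ⊗ₜ[fixedSubalgebra S i j] (X i)
      - (X j) ⊗ₜ[fixedSubalgebra S i j] (1 : MvPowerSeries (Fin n) S))

open TensorProduct in
/-- The element `ξ' = x_{i+1}⊗1 −_F 1⊗x_{i+1} := (g(x_j,x_i)⁻¹ ⊗ 1)·(1 ⊗ x_i − x_i ⊗ 1)` of `A`. -/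
noncomputable def xiElt' (g : MvPowerSeries (Fin 2) S) {n : ℕ} (i j : Fin n) : BSB S i j :=
  (Ring.inverse (gsub g (X j) (X i)) ⊗ₜ[fixedSubalgebra S i j] (1 : MvPowerSeries (Fin n) S)) *
    ((1 : MvPowerSeries (Fin n) S) ⊗ₜ[fixedSubalgebra S i j] (X i)
      - (X i) ⊗ₜ[fixedSubalgebra S i j] (1 : MvPowerSeries (Fin n) S))

open TensorProduct

/-!
Substituting `(x_j, x_i)` into `x − y = (x −_F y)·g(x,y)` shows that `b := ∂'_i(r)·g(x_j,x_i)⁻¹`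
satisfies `b·(x_j − x_i) = s_i(r) − r`. As `x_j − x_i` is a non-zero-divisor, both `b` and
`a := r − x_i·b` are `s_i`-invariant, so in `A` the decomposition `r = a + x_i·b` gives
`1 ⊗ r − r ⊗ 1 = (b ⊗ 1)(1 ⊗ x_i − x_i ⊗ 1) = (∂'_i(r) ⊗ 1)·ξ'`; multiplying by `r₁ ⊗ 1` gives the
general identity.

For arguments with zero constant coefficient the truncated sum `msubst` is Mathlib's
`MvPowerSeries.subst`, which supplies the ring-homomorphism and composition laws of substitution.
-/

section Substitution

variable {k n : ℕ}

theorem coeff_prod_pow_eq_zero_of_degree_lt {a : Fin k → MvPowerSeries (Fin n) S}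
    (ha : ∀ j, constantCoeff (a j) = 0) {d : Fin k →₀ ℕ} {m : Fin n →₀ ℕ} {s : Fin k}
    (hm : m.degree < d s) :
    coeff m (∏ j, a j ^ d j) = 0 := by
  refine coeff_of_lt_order (lt_of_lt_of_le ?_ (le_order_prod _ _))
  calc (m.degree : ℕ∞) < d s := by exact_mod_cast hm
    _ ≤ ∑ j, (d j : ℕ∞) := by
      exact_mod_cast Finset.single_le_sum (fun _ _ => Nat.zero_le _) (Finset.mem_univ s)
    _ ≤ ∑ j, (a j ^ d j).order :=
      Finset.sum_le_sum fun j _ => le_order_pow_of_constantCoeff_eq_zero _ (ha j)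

theorem msubst_eq_subst {a : Fin k → MvPowerSeries (Fin n) S}
    (ha : ∀ j, constantCoeff (a j) = 0) (F : MvPowerSeries (Fin k) S) :
    msubst a F = subst a F := by
  ext m
  have hprod (d : Fin k →₀ ℕ) : (d.prod fun s e => a s ^ e) = ∏ j, a j ^ d j :=
    Finsupp.prod_fintype _ _ fun _ => pow_zero _
  rw [coeff_subst (hasSubst_of_constantCoeff_zero ha), finsum_eq_sum_of_support_subset _
    (s := Finset.Iic (equivFunOnFinite.symm fun _ : Fin k => m.sum fun _ e => e))]
  · exact Finset.sum_congr rfl fun d _ => by rw [hprod, smul_eq_mul]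
  · intro d hd
    by_contra hle
    simp only [Finset.coe_Iic, Set.mem_Iic, Finsupp.le_def, not_forall, not_le] at hle
    obtain ⟨s, hs⟩ := hle
    refine hd ?_
    beta_reduce
    rw [hprod, coeff_prod_pow_eq_zero_of_degree_lt ha hs, smul_zero]

theorem constantCoeff_msubst {a : Fin k → MvPowerSeries (Fin n) S}
    (ha : ∀ j, constantCoeff (a j) = 0) {F : MvPowerSeries (Fin k) S}
    (hF : constantCoeff F = 0) : constantCoeff (msubst a F) = 0 := by
  rw [msubst_eq_subst ha]
  exact constantCoeff_subst_eq_zero (hasSubst_of_constantCoeff_zero ha) ha hF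

theorem subst_msubst {l : ℕ} {a : Fin k → MvPowerSeries (Fin l) S}
    (ha : ∀ j, constantCoeff (a j) = 0) {c : Fin l → MvPowerSeries (Fin n) S}
    (hc : ∀ j, constantCoeff (c j) = 0) (F : MvPowerSeries (Fin k) S) :
    subst c (msubst a F) = msubst (fun j => subst c (a j)) F := by
  have hca (j : Fin k) : constantCoeff (subst c (a j)) = 0 :=
    constantCoeff_subst_eq_zero (hasSubst_of_constantCoeff_zero hc) hc (ha j)
  rw [msubst_eq_subst ha, msubst_eq_subst hca, subst_comp_subst_apply
    (hasSubst_of_constantCoeff_zero ha) (hasSubst_of_constantCoeff_zero hc)]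

theorem sub_eq_fsub_mul_gsub {F g : MvPowerSeries (Fin 2) S} {ι : MvPowerSeries (Fin 1) S}
    (hι : constantCoeff ι = 0)
    (hg : (X 0 : MvPowerSeries (Fin 2) S) - X 1 = fsub F ι (X 0) (X 1) * g)
    {a b : MvPowerSeries (Fin n) S} (ha : constantCoeff a = 0) (hb : constantCoeff b = 0) :
    a - b = fsub F ι a b * gsub g a b := by
  have hab : ∀ j, constantCoeff (![a, b] j) = 0 := Fin.forall_fin_two.mpr ⟨ha, hb⟩
  have hsub := hasSubst_of_constantCoeff_zero hab
  have hX1 : ∀ j, constantCoeff ((![X 1] : Fin 1 → MvPowerSeries (Fin 2) S) j) = 0 := by simp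
  have hfam : ∀ j,
      constantCoeff ((![X 0, fneg ι (X 1)] : Fin 2 → MvPowerSeries (Fin 2) S) j) = 0 :=
    Fin.forall_fin_two.mpr ⟨constantCoeff_X 0, constantCoeff_msubst hX1 hι⟩
  have hneg : subst ![a, b] (fneg ι (X 1)) = fneg ι b := by
    rw [fneg, subst_msubst hX1 hab, fneg]
    congr 1
    funext j
    fin_cases j
    simp [subst_X hsub]
  have hfam' :
      (fun j => subst ![a, b] ((![X 0, fneg ι (X 1)] : Fin 2 → _) j)) = ![a, fneg ι b] := by
    funext j
    fin_cases j
    · simp [subst_X hsub]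
    · simpa using hneg
  have hsubst := congrArg (subst ![a, b]) hg
  rwa [subst_sub hsub, subst_mul hsub, subst_X hsub, subst_X hsub, fsub, subst_msubst hfam hab,
    hfam', ← msubst_eq_subst hab] at hsubst

theorem isUnit_gsub {g : MvPowerSeries (Fin 2) S} (hg : IsUnit g)
    {a b : MvPowerSeries (Fin n) S} (ha : constantCoeff a = 0) (hb : constantCoeff b = 0) :
    IsUnit (gsub g a b) := by
  have hab : ∀ j, constantCoeff (![a, b] j) = 0 := Fin.forall_fin_two.mpr ⟨ha, hb⟩
  rw [gsub, msubst_eq_subst hab, ← coe_substAlgHom (hasSubst_of_constantCoeff_zero hab)]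
  exact hg.map _

theorem mul_inverse_gsub_mul_sub {F g : MvPowerSeries (Fin 2) S} {ι : MvPowerSeries (Fin 1) S}
    (hι : constantCoeff ι = 0)
    (hg : (X 0 : MvPowerSeries (Fin 2) S) - X 1 = fsub F ι (X 0) (X 1) * g) (hgu : IsUnit g)
    {a b : MvPowerSeries (Fin n) S} (ha : constantCoeff a = 0) (hb : constantCoeff b = 0)
    {d t : MvPowerSeries (Fin n) S} (hd : fsub F ι a b * d = t) :
    d * Ring.inverse (gsub g a b) * (a - b) = t := by
  rw [sub_eq_fsub_mul_gsub hι hg ha hb, ← hd]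
  linear_combination (fsub F ι a b * d) * Ring.inverse_mul_cancel _ (isUnit_gsub hgu ha hb)

end Substitution

section Swap

variable {n : ℕ}

theorem swapVars_X (i j k : Fin n) :
    swapVars i j (X k : MvPowerSeries (Fin n) S) = X (Equiv.swap i j k) := by
  classical
  ext m
  have hiff :
      equivMapDomain (Equiv.swap i j) m = single k 1 ↔ m = single (Equiv.swap i j k) 1 := by
    rw [← (equivCongrLeft (Equiv.swap i j)).injective.eq_iff, equivCongrLeft_apply,
      equivCongrLeft_apply, equivMapDomain_single, equivMapDomain_swap_invol]
  simp only [swapVars_coeff, coeff_X, hiff]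

theorem swapVars_swapVars (i j : Fin n) (f : MvPowerSeries (Fin n) S) :
    swapVars i j (swapVars i j f) = f := by
  ext m
  rw [swapVars_coeff, swapVars_coeff, equivMapDomain_swap_invol]

theorem eq_zero_of_X_sub_X_mul_eq_zero {σ R : Type*} [CommRing R] {i j : σ} (hij : i ≠ j)
    {f : MvPowerSeries σ R} (h : (X j - X i) * f = 0) : f = 0 := by
  classical
  ext m
  have hpow : (X j ^ (m j + 1) - X i ^ (m j + 1)) * f = 0 := by
    obtain ⟨c, hc⟩ := sub_dvd_pow_sub_pow (X j : MvPowerSeries σ R) (X i) (m j + 1)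
    rw [hc, mul_comm (X j - X i) c, mul_assoc, h, mul_zero]
  have hnle : ¬ single j (m j + 1) ≤ single i (m j + 1) + m := fun hle => by
    simpa [single_apply, hij] using hle j
  have hcoeff := congrArg (coeff (single i (m j + 1) + m)) hpow
  rwa [sub_mul, map_sub, X_pow_eq, X_pow_eq, coeff_monomial_mul, if_neg hnle,
    coeff_add_monomial_mul, one_mul, zero_sub, map_zero, neg_eq_zero] at hcoeff

theorem swapVars_sub (i j : Fin n) (f h : MvPowerSeries (Fin n) S) :
    swapVars i j (f - h) = swapVars i j f - swapVars i j h := rfl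

variable {i j : Fin n} {r b : MvPowerSeries (Fin n) S}

theorem swapVars_eq_self_of_mul_X_sub_X (hij : i ≠ j)
    (hb : b * (X j - X i) = swapVars i j r - r) : swapVars i j b = b := by
  have hsb := congrArg (swapVars i j) hb
  rw [swapVars_mul, swapVars_sub, swapVars_sub, swapVars_X, swapVars_X, Equiv.swap_apply_left,
    Equiv.swap_apply_right, swapVars_swapVars] at hsb
  exact sub_eq_zero.mp (eq_zero_of_X_sub_X_mul_eq_zero hij (by linear_combination -hsb - hb))

theorem swapVars_sub_X_mul_eq_self (hij : i ≠ j)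
    (hb : b * (X j - X i) = swapVars i j r - r) : swapVars i j (r - X i * b) = r - X i * b := by
  rw [swapVars_sub, swapVars_mul, swapVars_X, Equiv.swap_apply_left,
    swapVars_eq_self_of_mul_X_sub_X hij hb]
  linear_combination -hb

end Swap

theorem algebraMap_mul_tmul {K R : Type*} [CommSemiring K] [Semiring R] [Algebra K R]
    (c : K) (x y : R) :
    (algebraMap K R c * x) ⊗ₜ[K] y = x ⊗ₜ[K] (algebraMap K R c * y) := by
  rw [← Algebra.smul_def, ← Algebra.smul_def, smul_tmul]

theorem one_tmul_sub_tmul_one_of_eq_add_mul {K R : Type*} [CommRing K] [CommRing R]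
    [Algebra K R] (a b : K) (x : R) :
    (1 : R) ⊗ₜ[K] (algebraMap K R a + x * algebraMap K R b)
        - (algebraMap K R a + x * algebraMap K R b) ⊗ₜ[K] (1 : R)
      = (algebraMap K R b ⊗ₜ[K] (1 : R)) * ((1 : R) ⊗ₜ[K] x - x ⊗ₜ[K] (1 : R)) := by
  have ha := algebraMap_mul_tmul a (1 : R) 1
  have hb := algebraMap_mul_tmul b (1 : R) x
  simp only [mul_one] at ha hb
  simp only [tmul_add, add_tmul, mul_sub, Algebra.TensorProduct.tmul_mul_tmul, mul_one, one_mul,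
    ← ha, mul_comm x, hb]
  abel

theorem one_tmul_sub_tmul_one_eq_of_mul_X_sub_X {n : ℕ} {i j : Fin n} (hij : i ≠ j)
    {r b : MvPowerSeries (Fin n) S} (hb : b * (X j - X i) = swapVars i j r - r) :
    ((1 : MvPowerSeries (Fin n) S) ⊗ₜ[fixedSubalgebra S i j] r
        - r ⊗ₜ[fixedSubalgebra S i j] 1 : BSB S i j)
      = (b ⊗ₜ[fixedSubalgebra S i j] (1 : MvPowerSeries (Fin n) S))
        * ((1 : MvPowerSeries (Fin n) S) ⊗ₜ[fixedSubalgebra S i j] X i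
          - X i ⊗ₜ[fixedSubalgebra S i j] (1 : MvPowerSeries (Fin n) S)) := by
  have h := one_tmul_sub_tmul_one_of_eq_add_mul (K := fixedSubalgebra S i j)
    ⟨r - X i * b, swapVars_sub_X_mul_eq_self hij hb⟩
    ⟨b, swapVars_eq_self_of_mul_X_sub_X hij hb⟩ (X i : MvPowerSeries (Fin n) S)
  simpa only [Subalgebra.algebraMap_apply, sub_add_cancel] using h

theorem tensor_splitting_identity_general
    (F : MvPowerSeries (Fin 2) S)
    (ι : MvPowerSeries (Fin 1) S) (hι : IsFormalInverse F ι)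
    (g : MvPowerSeries (Fin 2) S)
    (hg : (X 0 : MvPowerSeries (Fin 2) S) - X 1 = fsub F ι (X 0) (X 1) * g)
    (hgu : IsUnit g)
    {n : ℕ} (i j : Fin n) (hij : (i : ℕ) + 1 = (j : ℕ))
    (Dem' : MvPowerSeries (Fin n) S → MvPowerSeries (Fin n) S)
    (hDem' : ∀ f, fsub F ι (X j : MvPowerSeries (Fin n) S) (X i) * Dem' f
                    = swapVars i j f - f) :
    (∀ r1 r2 : MvPowerSeries (Fin n) S,
        (r1 ⊗ₜ[fixedSubalgebra S i j] r2 : BSB S i j)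
          = (r1 * r2) ⊗ₜ[fixedSubalgebra S i j] (1 : MvPowerSeries (Fin n) S)
            + ((r1 * Dem' r2) ⊗ₜ[fixedSubalgebra S i j] (1 : MvPowerSeries (Fin n) S))
                * xiElt' g i j) ∧
    (∀ r : MvPowerSeries (Fin n) S,
        ((1 : MvPowerSeries (Fin n) S) ⊗ₜ[fixedSubalgebra S i j] r
            - r ⊗ₜ[fixedSubalgebra S i j] (1 : MvPowerSeries (Fin n) S) : BSB S i j)
          = (Dem' r ⊗ₜ[fixedSubalgebra S i j] (1 : MvPowerSeries (Fin n) S))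
              * xiElt' g i j) := by
  have hij' : i ≠ j := fun h => by simp [h] at hij
  have split (r : MvPowerSeries (Fin n) S) :
      ((1 : MvPowerSeries (Fin n) S) ⊗ₜ[fixedSubalgebra S i j] r
          - r ⊗ₜ[fixedSubalgebra S i j] (1 : MvPowerSeries (Fin n) S) : BSB S i j)
        = (Dem' r ⊗ₜ[fixedSubalgebra S i j] (1 : MvPowerSeries (Fin n) S)) * xiElt' g i j := by
    rw [one_tmul_sub_tmul_one_eq_of_mul_X_sub_X hij'
      (mul_inverse_gsub_mul_sub hι.1 hg hgu (constantCoeff_X j) (constantCoeff_X i) (hDem' r)),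
      xiElt', ← mul_assoc, Algebra.TensorProduct.tmul_mul_tmul, mul_one]
  refine ⟨fun r1 r2 => ?_, split⟩
  calc (r1 ⊗ₜ[fixedSubalgebra S i j] r2 : BSB S i j)
      = (r1 ⊗ₜ[fixedSubalgebra S i j] (1 : MvPowerSeries (Fin n) S))
          * (r2 ⊗ₜ[fixedSubalgebra S i j] 1
            + ((1 : MvPowerSeries (Fin n) S) ⊗ₜ[fixedSubalgebra S i j] r2
              - r2 ⊗ₜ[fixedSubalgebra S i j] 1)) := by
        rw [add_sub_cancel, Algebra.TensorProduct.tmul_mul_tmul, mul_one, one_mul]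
    _ = _ := by
        rw [split, mul_add, ← mul_assoc, Algebra.TensorProduct.tmul_mul_tmul,
          Algebra.TensorProduct.tmul_mul_tmul, mul_one]

/-- the splitting identity
`r1 ⊗ r2 = (r1·r2) ⊗ 1 + ((r1·∂'_i(r2)) ⊗ 1)·ξ'` in `A = R ⊗_{R^{s_i}} R`, and in
particular `1 ⊗ r − r ⊗ 1 = (∂'_i(r) ⊗ 1)·ξ'`. -/
theorem tensor_splitting_identity
    (F : MvPowerSeries (Fin 2) S) (hF : IsFormalGroupLaw F)
    (ι : MvPowerSeries (Fin 1) S) (hι : IsFormalInverse F ι)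
    (g : MvPowerSeries (Fin 2) S)
    (hg : (X 0 : MvPowerSeries (Fin 2) S) - X 1 = fsub F ι (X 0) (X 1) * g)
    (hgu : IsUnit g)
    {n : ℕ} (i j : Fin n) (hij : (i : ℕ) + 1 = (j : ℕ))
    (Dem' : MvPowerSeries (Fin n) S → MvPowerSeries (Fin n) S)
    (hDem' : ∀ f, fsub F ι (X j : MvPowerSeries (Fin n) S) (X i) * Dem' f
                    = swapVars i j f - f) :
    (∀ r1 r2 : MvPowerSeries (Fin n) S,
        (r1 ⊗ₜ[fixedSubalgebra S i j] r2 : BSB S i j)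
          = (r1 * r2) ⊗ₜ[fixedSubalgebra S i j] (1 : MvPowerSeries (Fin n) S)
            + ((r1 * Dem' r2) ⊗ₜ[fixedSubalgebra S i j] (1 : MvPowerSeries (Fin n) S))
                * xiElt' g i j) ∧
    (∀ r : MvPowerSeries (Fin n) S,
        ((1 : MvPowerSeries (Fin n) S) ⊗ₜ[fixedSubalgebra S i j] r
            - r ⊗ₜ[fixedSubalgebra S i j] (1 : MvPowerSeries (Fin n) S) : BSB S i j)
          = (Dem' r ⊗ₜ[fixedSubalgebra S i j] (1 : MvPowerSeries (Fin n) S))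
              * xiElt' g i j) :=
  tensor_splitting_identity_general F ι hι g hg hgu i j hij Dem' hDem'
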